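/- Let B be the v×v adjacency matrix of an SRG(v,k,λ,μ) with μ = k/2 and k > 0, let β ∈ ℝ be nonzero, let n = v+1, and let G be the n×n block matrix G = [[1, β𝟏ᵀ],[β𝟏, 2βB + (β+1)I − βJ]]. Then G² = αG for a real number α if and only if α = vβ² + 1 and vβ² + (v−2k−1)β − 1 = 0; equivalently, β = (1/(2v))·[−(v−2k−1) ± sqrt((v−2k−1)²+4v)]. -/

import Mathlib

open Matrix

/-- The `v × v` all-ones matrix `J`. -/
def allOnes (v : ℕ) : Matrix (Fin v) (Fin v) ℝ := Matrix.of fun _ _ => 1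

/-- The `(v+1) × (v+1)` block matrix `[[1, β𝟏ᵀ], [β𝟏, 2βB + (β+1)I - βJ]]`. -/
def blockGram (v : ℕ) (B : Matrix (Fin v) (Fin v) ℝ) (β : ℝ) :
    Matrix (Fin (v + 1)) (Fin (v + 1)) ℝ :=
  Matrix.of fun i j =>
    if hi : i = 0 then (if j = 0 then 1 else β)
    else if hj : j = 0 then β
    else 2 * β * B (i.pred hi) (j.pred hj) + (β + 1) * (if i = j then 1 else 0) - β

/-!
Write `G = [[1, β𝟏ᵀ], [β𝟏, M]]` with `M = 2βB + (β+1)I - βJ`. Then `G² = αG` splits into the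
block equations `1 + vβ² = α`, `β (1 + (column and row sums of M)) = αβ` and `β²J + M² = αM`.
The SRG equation forces `B` to be `k`-regular, so `BJ = JB = kJ`, and then the parameter identity
`k(k - λ - 1) = μ(v - k - 1)` with `μ = k/2` gives `λ = (3k - v - 1)/2`. Hence `M` has constant
line sums `2βk + β + 1 - vβ`, which turns the first two block equations into
`α = vβ² + 1` and the quadratic `Q = vβ² + (v-2k-1)β - 1 = 0` (using `β ≠ 0`), while `M²` is a
combination of `B`, `I`, `J` and the last block equation holds as soon as `Q = 0`.
-/

section AllOnes

variable {v : ℕ}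

theorem allOnes_mul_allOnes : allOnes v * allOnes v = (v : ℝ) • allOnes v := by
  ext i j
  simp [allOnes, mul_apply]

theorem mul_allOnes_apply (A : Matrix (Fin v) (Fin v) ℝ) (i j : Fin v) :
    (A * allOnes v) i j = ∑ b, A i b := by
  simp [allOnes, mul_apply]

theorem allOnes_mul_apply (A : Matrix (Fin v) (Fin v) ℝ) (i j : Fin v) :
    (allOnes v * A) i j = ∑ a, A a j := by
  simp [allOnes, mul_apply]

end AllOnes

section StronglyRegular

variable {v : ℕ} {B : Matrix (Fin v) (Fin v) ℝ} {k l m : ℝ}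

/-- The diagonal of the SRG equation, as `B a b * B b a = B a b` for a symmetric `0/1` matrix. -/
theorem sum_row_eq_of_srg (hsym : B.IsSymm) (h01 : ∀ i j, B i j = 0 ∨ B i j = 1)
    (hdiag : ∀ i, B i i = 0) (hsrg : B * B = (l - m) • B + (k - m) • 1 + m • allOnes v)
    (a : Fin v) : ∑ b, B a b = k := by
  have hdiag_sq := congrFun (congrFun hsrg a) a
  simp only [mul_apply, Matrix.add_apply, Matrix.smul_apply, one_apply_eq, allOnes, of_apply,
    smul_eq_mul, hdiag, mul_zero, mul_one, zero_add, sub_add_cancel] at hdiag_sq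
  rw [← hdiag_sq]
  refine Finset.sum_congr rfl fun b _ => ?_
  rw [hsym.apply a b]
  rcases h01 a b with h | h <;> simp [h]

theorem mul_allOnes_of_sum_row (hrow : ∀ a, ∑ b, B a b = k) :
    B * allOnes v = k • allOnes v := by
  ext i j
  rw [mul_allOnes_apply, hrow]
  simp [allOnes]

theorem allOnes_mul_of_sum_row (hsym : B.IsSymm) (hrow : ∀ a, ∑ b, B a b = k) :
    allOnes v * B = k • allOnes v := by
  ext i j
  simp_rw [allOnes_mul_apply, ← hsym.apply, hrow]
  simp [allOnes]

theorem srg_parameter_identity (hv : 0 < v) (hBJ : B * allOnes v = k • allOnes v)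
    (hsrg : B * B = (l - m) • B + (k - m) • 1 + m • allOnes v) :
    k * (k - l - 1) = m * (v - k - 1) := by
  have hBBJ : B * B * allOnes v = (k * k) • allOnes v := by
    rw [Matrix.mul_assoc, hBJ, Matrix.mul_smul, hBJ, smul_smul]
  rw [hsrg, add_mul, add_mul, smul_mul, smul_mul, smul_mul, hBJ, Matrix.one_mul,
    allOnes_mul_allOnes, smul_smul, smul_smul, ← add_smul, ← add_smul] at hBBJ
  have := congrFun (congrFun hBBJ ⟨0, hv⟩) ⟨0, hv⟩
  simp only [Matrix.smul_apply, allOnes, of_apply, smul_eq_mul, mul_one] at this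
  linear_combination -this

end StronglyRegular

section BlockGram

variable {v : ℕ} {B : Matrix (Fin v) (Fin v) ℝ} {β : ℝ}

def blockGramCorner (v : ℕ) (B : Matrix (Fin v) (Fin v) ℝ) (β : ℝ) : Matrix (Fin v) (Fin v) ℝ :=
  (2 * β) • B + (β + 1) • 1 - β • allOnes v

@[simp] theorem blockGram_zero_zero : blockGram v B β 0 0 = 1 := by simp [blockGram]

@[simp] theorem blockGram_zero_succ (b : Fin v) : blockGram v B β 0 b.succ = β := by
  simp [blockGram]

@[simp] theorem blockGram_succ_zero (a : Fin v) : blockGram v B β a.succ 0 = β := by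
  simp [blockGram]

@[simp] theorem blockGram_succ_succ (a b : Fin v) :
    blockGram v B β a.succ b.succ = blockGramCorner v B β a b := by
  simp [blockGram, blockGramCorner, allOnes, one_apply]

theorem blockGram_mul_self_zero_zero :
    (blockGram v B β * blockGram v B β) 0 0 = 1 + v * β ^ 2 := by
  simp [mul_apply, Fin.sum_univ_succ, sq, add_comm]

theorem blockGram_mul_self_zero_succ (b : Fin v) :
    (blockGram v B β * blockGram v B β) 0 b.succ = β * (1 + ∑ a, blockGramCorner v B β a b) := by
  simp [mul_apply, Fin.sum_univ_succ, mul_add, Finset.mul_sum]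

theorem blockGram_mul_self_succ_zero (a : Fin v) :
    (blockGram v B β * blockGram v B β) a.succ 0 = β * (1 + ∑ b, blockGramCorner v B β a b) := by
  simp [mul_apply, Fin.sum_univ_succ, mul_add, Finset.mul_sum, mul_comm]

theorem blockGram_mul_self_succ_succ (a b : Fin v) :
    (blockGram v B β * blockGram v B β) a.succ b.succ =
      β ^ 2 + (blockGramCorner v B β * blockGramCorner v B β) a b := by
  simp [mul_apply, Fin.sum_univ_succ, sq]

theorem blockGram_mul_self_eq_smul_iff (α : ℝ) :
    blockGram v B β * blockGram v B β = α • blockGram v B β ↔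
      1 + v * β ^ 2 = α ∧
      (∀ b, β * (1 + ∑ a, blockGramCorner v B β a b) = α * β) ∧
      (∀ a, β * (1 + ∑ b, blockGramCorner v B β a b) = α * β) ∧
      β ^ 2 • allOnes v + blockGramCorner v B β * blockGramCorner v B β =
        α • blockGramCorner v B β := by
  constructor
  · intro h
    refine ⟨?_, fun b => ?_, fun a => ?_, ?_⟩
    · simpa [blockGram_mul_self_zero_zero] using congrFun (congrFun h 0) 0
    · simpa [blockGram_mul_self_zero_succ] using congrFun (congrFun h 0) b.succ
    · simpa [blockGram_mul_self_succ_zero] using congrFun (congrFun h a.succ) 0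
    · ext a b
      simpa [blockGram_mul_self_succ_succ, allOnes] using congrFun (congrFun h a.succ) b.succ
  · rintro ⟨h00, h0s, hs0, hss⟩
    ext i j
    cases i using Fin.cases <;> cases j using Fin.cases
    · simp [blockGram_mul_self_zero_zero, h00]
    · simp [blockGram_mul_self_zero_succ, h0s]
    · simp [blockGram_mul_self_succ_zero, hs0]
    · simpa [blockGram_mul_self_succ_succ, allOnes] using congrFun (congrFun hss _) _

variable {k l m : ℝ}

theorem blockGramCorner_mul_allOnes (hBJ : B * allOnes v = k • allOnes v) :
    blockGramCorner v B β * allOnes v = (2 * β * k + β + 1 - v * β) • allOnes v := by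
  simp only [blockGramCorner, sub_mul, add_mul, smul_mul, Matrix.one_mul, hBJ,
    allOnes_mul_allOnes, smul_smul]
  module

theorem allOnes_mul_blockGramCorner (hJB : allOnes v * B = k • allOnes v) :
    allOnes v * blockGramCorner v B β = (2 * β * k + β + 1 - v * β) • allOnes v := by
  simp only [blockGramCorner, mul_sub, mul_add, Matrix.mul_smul, Matrix.mul_one, hJB,
    allOnes_mul_allOnes, smul_smul]
  module

theorem blockGramCorner_mul_self (hBJ : B * allOnes v = k • allOnes v)
    (hJB : allOnes v * B = k • allOnes v)
    (hsrg : B * B = (l - m) • B + (k - m) • 1 + m • allOnes v) :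
    blockGramCorner v B β * blockGramCorner v B β =
      (4 * β ^ 2 * (l - m) + 4 * β * (β + 1)) • B + (4 * β ^ 2 * (k - m) + (β + 1) ^ 2) • 1 +
        (4 * β ^ 2 * m - 4 * β ^ 2 * k - 2 * β * (β + 1) + v * β ^ 2) • allOnes v := by
  simp only [blockGramCorner, sub_mul, mul_sub, add_mul, mul_add, smul_mul, Matrix.mul_smul,
    Matrix.one_mul, Matrix.mul_one, hsrg, hBJ, hJB, allOnes_mul_allOnes, smul_smul, smul_add]
  module

end BlockGram

theorem blockGram_mul_self_eq_smul_iff_of_srg {v : ℕ} (hv : 0 < v)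
    {B : Matrix (Fin v) (Fin v) ℝ} {k l : ℝ} (hk : k ≠ 0) (hsym : B.IsSymm)
    (h01 : ∀ i j, B i j = 0 ∨ B i j = 1) (hdiag : ∀ i, B i i = 0)
    (hsrg : B * B = (l - k / 2) • B + (k - k / 2) • 1 + (k / 2) • allOnes v)
    {β : ℝ} (hβ : β ≠ 0) (α : ℝ) :
    blockGram v B β * blockGram v B β = α • blockGram v B β ↔
      α = v * β ^ 2 + 1 ∧ v * β ^ 2 + (v - 2 * k - 1) * β - 1 = 0 := by
  have hrow := sum_row_eq_of_srg hsym h01 hdiag hsrg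
  have hBJ := mul_allOnes_of_sum_row hrow
  have hJB := allOnes_mul_of_sum_row hsym hrow
  have hl : l = (3 * k - v - 1) / 2 := by
    have := srg_parameter_identity hv hBJ hsrg
    apply mul_left_cancel₀ hk
    linear_combination -this
  have hcorner_row (a) : ∑ b, blockGramCorner v B β a b = 2 * β * k + β + 1 - v * β := by
    rw [← mul_allOnes_apply _ a a, blockGramCorner_mul_allOnes hBJ]
    simp [allOnes]
  have hcorner_col (b) : ∑ a, blockGramCorner v B β a b = 2 * β * k + β + 1 - v * β := by
    rw [← allOnes_mul_apply _ b b, allOnes_mul_blockGramCorner hJB]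
    simp [allOnes]
  have : Nonempty (Fin v) := ⟨⟨0, hv⟩⟩
  rw [blockGram_mul_self_eq_smul_iff, blockGramCorner_mul_self hBJ hJB hsrg]
  simp only [hcorner_row, hcorner_col, forall_const, and_self_left]
  constructor
  · rintro ⟨rfl, hcol, -⟩
    refine ⟨by ring, mul_left_cancel₀ hβ ?_⟩
    linear_combination -hcol
  · rintro ⟨rfl, hQ⟩
    refine ⟨by ring, by linear_combination -β * hQ, ?_⟩
    -- the coefficients of `B`, `I`, `J` in `β²J + M² - αM` are `-2βQ`, `-βQ`, `βQ`
    rw [blockGramCorner, hl]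
    linear_combination (norm := module) (β * hQ) • (allOnes v - (2 : ℝ) • B - 1)

theorem quadratic_eq_zero_iff_sqrt {a b c x : ℝ} (ha : a ≠ 0) (hd : 0 ≤ discrim a b c) :
    a * x ^ 2 + b * x + c = 0 ↔
      x = 1 / (2 * a) * (-b + √(discrim a b c)) ∨ x = 1 / (2 * a) * (-b - √(discrim a b c)) := by
  rw [sq, quadratic_eq_zero_iff ha (Real.mul_self_sqrt hd).symm, one_div_mul_eq_div,
    one_div_mul_eq_div]

/-- Let `B` be the adjacency matrix of an `SRG(v,k,λ,μ)` with `μ = k/2` and `k > 0`,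
let `β ≠ 0`, and let `G = [[1, β𝟏ᵀ], [β𝟏, 2βB + (β+1)I - βJ]]`.  Then `G² = αG`
iff `α = vβ² + 1` and `vβ² + (v-2k-1)β - 1 = 0`; equivalently,
`β = (1/(2v))[-(v-2k-1) ± √((v-2k-1)²+4v)]`. -/
theorem blockGram_quadratic_iff (v : ℕ) (hv : 0 < v)
    (B : Matrix (Fin v) (Fin v) ℝ) (k l : ℝ) (hk : 0 < k)
    (hsym : B.IsSymm)
    (h01 : ∀ i j, B i j = 0 ∨ B i j = 1)
    (hdiag : ∀ i, B i i = 0)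
    (hsrg : B * B = (l - k / 2) • B + (k - k / 2) • 1 + (k / 2) • allOnes v)
    (β : ℝ) (hβ : β ≠ 0) (α : ℝ) :
    blockGram v B β * blockGram v B β = α • blockGram v B β ↔
      (α = (v : ℝ) * β ^ 2 + 1 ∧
        (v : ℝ) * β ^ 2 + ((v : ℝ) - 2 * k - 1) * β - 1 = 0 ∧
        (β = (1 / (2 * (v : ℝ)))
            * (-((v : ℝ) - 2 * k - 1) + Real.sqrt (((v : ℝ) - 2 * k - 1) ^ 2 + 4 * v)) ∨
          β = (1 / (2 * (v : ℝ)))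
            * (-((v : ℝ) - 2 * k - 1) - Real.sqrt (((v : ℝ) - 2 * k - 1) ^ 2 + 4 * v)))) := by
  have hdisc : discrim (v : ℝ) (v - 2 * k - 1) (-1) = (v - 2 * k - 1) ^ 2 + 4 * v := by
    rw [discrim]
    ring
  have hroots := quadratic_eq_zero_iff_sqrt (x := β) (Nat.cast_ne_zero.mpr hv.ne')
    (by rw [hdisc]; positivity)
  rw [hdisc, ← sub_eq_add_neg] at hroots
  rw [blockGram_mul_self_eq_smul_iff_of_srg hv hk.ne' hsym h01 hdiag hsrg hβ, ← hroots, and_self]
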